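/- Let (H,α) be a Hom-Hopf algebra, (B,β) a left H-module Hom-algebra, and (A,γ) a left H-comodule algebra with coaction a ↦ a₍₋₁₎⊗a₍₀₎. Then the multiplication (b⊗a)(b'⊗a') = b(α⁻²(a₍₋₁₎)·β⁻¹(b')) ⊗ γ⁻¹(a₍₀₎)a' makes (B⊗A, β⊗γ) into a Hom-associative algebra with unit 1⊗1 (denoted B⋉A). -/

import Mathlib

/-!
Writing the product as `(b ⊗ a)(b' ⊗ a') = Φ_{b,b',a'}(ρ a)` with `Φ_{b,b',a'} = smashMulρ b b' a'`
linear on `H ⊗ A` frees it from the chosen Sweedler decompositions. The unit laws follow from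
`ρ 1 = 1 ⊗ 1` and the counit axiom of `ρ`, and multiplicativity of `β ⊗ γ` from
`ρ ∘ γ = (α ⊗ γ) ∘ ρ`. For Hom-associativity, the module-algebra axiom `α²(h)·(xy) = (h₁·x)(h₂·y)`
on the left and multiplicativity of `ρ` on the right, together with Hom-associativity of `B` and
`A`, turn the two sides into the images of `(Δ ⊗ γ)ρ(a)` and `(α ⊗ ρ)ρ(a)` under one linear map;
these agree by Hom-coassociativity of `ρ`.
-/

open scoped TensorProduct BigOperators

universe u v

/-- A Hom-Hopf algebra over a field `k`, with a chosen Sweedler-type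
decomposition (`Idx`, `T`, `d1`, `d2`) of the comultiplication:
`comul h = ∑ i in T h, d1 h i ⊗ₜ d2 h i`.  The structure map `α` is assumed
bijective (a linear equivalence), as throughout the paper. -/
structure HomHopf (k : Type u) (H : Type v) [Field k] [AddCommGroup H] [Module k H] where
  mul : H →ₗ[k] H →ₗ[k] H
  one : H
  α : H ≃ₗ[k] H
  comul : H →ₗ[k] H ⊗[k] H
  counit : H →ₗ[k] k
  S : H →ₗ[k] H
  Idx : Type v
  T : H → Finset Idx
  d1 : H → Idx → H
  d2 : H → Idx → H
  repr : ∀ h, comul h = ∑ i ∈ T h, d1 h i ⊗ₜ[k] d2 h i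
  α_one : α one = one
  α_mul : ∀ x y, α (mul x y) = mul (α x) (α y)
  one_mul : ∀ x, mul one x = α x
  mul_one : ∀ x, mul x one = α x
  hom_assoc : ∀ x y z, mul (α x) (mul y z) = mul (mul x y) (α z)
  counit_α : ∀ h, counit (α h) = counit h
  comul_α : ∀ h, comul (α h) = ∑ i ∈ T h, α (d1 h i) ⊗ₜ[k] α (d2 h i)
  counit_left : ∀ h, ∑ i ∈ T h, counit (d1 h i) • d2 h i = α h
  counit_right : ∀ h, ∑ i ∈ T h, counit (d2 h i) • d1 h i = α h
  hom_coassoc : ∀ h,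
    (TensorProduct.assoc k H H H) (∑ i ∈ T h, comul (d1 h i) ⊗ₜ[k] α (d2 h i))
      = ∑ i ∈ T h, α (d1 h i) ⊗ₜ[k] comul (d2 h i)
  counit_one : counit one = 1
  counit_mul : ∀ x y, counit (mul x y) = counit x * counit y
  comul_one : comul one = one ⊗ₜ[k] one
  comul_mul : ∀ x y, comul (mul x y)
      = ∑ i ∈ T x, ∑ j ∈ T y, mul (d1 x i) (d1 y j) ⊗ₜ[k] mul (d2 x i) (d2 y j)
  S_α : ∀ h, S (α h) = α (S h)
  S_left : ∀ h, ∑ i ∈ T h, mul (S (d1 h i)) (d2 h i) = counit h • one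
  S_right : ∀ h, ∑ i ∈ T h, mul (d1 h i) (S (d2 h i)) = counit h • one

/-- A unital Hom-associative algebra with bijective structure map. -/
structure HomAlg (k : Type u) (A : Type v) [Field k] [AddCommGroup A] [Module k A] where
  mul : A →ₗ[k] A →ₗ[k] A
  one : A
  β : A ≃ₗ[k] A
  β_one : β one = one
  β_mul : ∀ x y, β (mul x y) = mul (β x) (β y)
  one_mul : ∀ x, mul one x = β x
  mul_one : ∀ x, mul x one = β x
  hom_assoc : ∀ x y z, mul (β x) (mul y z) = mul (mul x y) (β z)

section S18

variable (k : Type u) (H B A : Type v) [Field k]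
  [AddCommGroup H] [Module k H] [AddCommGroup B] [Module k B]
  [AddCommGroup A] [Module k A]

/-- A left `H`-module Hom-algebra `(B,β)`. -/
structure LModAlg (HH : HomHopf k H) where
  mul : B →ₗ[k] B →ₗ[k] B
  one : B
  β : B ≃ₗ[k] B
  β_one : β one = one
  β_mul : ∀ x y, β (mul x y) = mul (β x) (β y)
  one_mul : ∀ x, mul one x = β x
  mul_one : ∀ x, mul x one = β x
  hom_assoc : ∀ x y z, mul (β x) (mul y z) = mul (mul x y) (β z)
  act : H →ₗ[k] B →ₗ[k] B
  act_one : ∀ b, act HH.one b = β b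
  act_assoc : ∀ h h' b, act (HH.α h) (act h' b) = act (HH.mul h h') (β b)
  β_act : ∀ h b, β (act h b) = act (HH.α h) (β b)
  act_mul : ∀ h b b', act (HH.α (HH.α h)) (mul b b')
    = ∑ i ∈ HH.T h, mul (act (HH.d1 h i) b) (act (HH.d2 h i) b')
  act_unit : ∀ h, act h one = HH.counit h • one

/-- A left `H`-comodule algebra `(A,γ)`, with a chosen Sweedler decomposition
`ρ a = ∑ i in Tc a, c1 a i ⊗ₜ c0 a i` of the coaction. -/
structure LComodAlg (HH : HomHopf k H) where
  mul : A →ₗ[k] A →ₗ[k] A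
  one : A
  γ : A ≃ₗ[k] A
  γ_one : γ one = one
  γ_mul : ∀ x y, γ (mul x y) = mul (γ x) (γ y)
  one_mul : ∀ x, mul one x = γ x
  mul_one : ∀ x, mul x one = γ x
  hom_assoc : ∀ x y z, mul (γ x) (mul y z) = mul (mul x y) (γ z)
  ρ : A →ₗ[k] H ⊗[k] A
  Kdx : Type v
  Tc : A → Finset Kdx
  c1 : A → Kdx → H
  c0 : A → Kdx → A
  reprρ : ∀ a, ρ a = ∑ i ∈ Tc a, c1 a i ⊗ₜ[k] c0 a i
  counit_ρ : ∀ a, ∑ i ∈ Tc a, HH.counit (c1 a i) • c0 a i = γ a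
  ρ_γ : ∀ a, ρ (γ a) = ∑ i ∈ Tc a, HH.α (c1 a i) ⊗ₜ[k] γ (c0 a i)
  ρ_coassoc : ∀ a, (TensorProduct.assoc k H H A)
      (∑ i ∈ Tc a, HH.comul (c1 a i) ⊗ₜ[k] γ (c0 a i))
    = ∑ i ∈ Tc a, HH.α (c1 a i) ⊗ₜ[k] ρ (c0 a i)
  ρ_mul : ∀ a a', ρ (mul a a')
    = ∑ i ∈ Tc a, ∑ j ∈ Tc a', HH.mul (c1 a i) (c1 a' j) ⊗ₜ[k] mul (c0 a i) (c0 a' j)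
  ρ_one : ρ one = HH.one ⊗ₜ[k] one

variable {k H B A}

open TensorProduct

namespace HomHopf

variable (HH : HomHopf k H)

lemma α_symm_one : HH.α.symm HH.one = HH.one := by
  rw [LinearEquiv.symm_apply_eq, HH.α_one]

lemma α_symm_mul (x y : H) :
    HH.α.symm (HH.mul x y) = HH.mul (HH.α.symm x) (HH.α.symm y) := by
  rw [LinearEquiv.symm_apply_eq, HH.α_mul]; simp

lemma counit_α_symm (h : H) : HH.counit (HH.α.symm h) = HH.counit h := by
  rw [← HH.counit_α, LinearEquiv.apply_symm_apply]

lemma comul_α_symm (h : H) :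
    HH.comul (HH.α.symm h)
      = map HH.α.symm.toLinearMap HH.α.symm.toLinearMap (HH.comul h) := by
  conv_rhs => rw [← HH.α.apply_symm_apply h, HH.comul_α, map_sum]
  simp [HH.repr]

end HomHopf

namespace LModAlg

variable {HH : HomHopf k H} (BB : LModAlg k H B HH)

lemma β_symm_one : BB.β.symm BB.one = BB.one := by
  rw [LinearEquiv.symm_apply_eq, BB.β_one]

lemma β_symm_mul (x y : B) :
    BB.β.symm (BB.mul x y) = BB.mul (BB.β.symm x) (BB.β.symm y) := by
  rw [LinearEquiv.symm_apply_eq, BB.β_mul]; simp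

noncomputable def mulActMul (x y z : B) : H ⊗[k] H →ₗ[k] B :=
  BB.mul (BB.β x) ∘ₗ lift (BB.mul.compl₁₂
    (BB.act.flip y ∘ₗ (HH.α.symm.trans (HH.α.symm.trans HH.α.symm)).toLinearMap)
    (BB.act.flip z ∘ₗ (HH.α.symm.trans (HH.α.symm.trans HH.α.symm)).toLinearMap))

@[simp] lemma mulActMul_tmul (x y z : B) (h g : H) :
    BB.mulActMul x y z (h ⊗ₜ g) = BB.mul (BB.β x)
      (BB.mul (BB.act (HH.α.symm (HH.α.symm (HH.α.symm h))) y)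
        (BB.act (HH.α.symm (HH.α.symm (HH.α.symm g))) z)) := by
  simp [mulActMul]

lemma mul_β_act_α_symm_mul (x y z : B) (h : H) :
    BB.mul (BB.β x) (BB.act (HH.α.symm h) (BB.mul y z)) = BB.mulActMul x y z (HH.comul h) := by
  have hα : HH.α.symm h = HH.α (HH.α (HH.α.symm (HH.α.symm (HH.α.symm h)))) := by simp
  have act_mul_eq_lift : ∀ g : H, ∑ i ∈ HH.T g, BB.mul (BB.act (HH.d1 g i) y) (BB.act (HH.d2 g i) z)
      = lift (BB.mul.compl₁₂ (BB.act.flip y) (BB.act.flip z)) (HH.comul g) := by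
    intro g; simp [HH.repr g]
  rw [hα, BB.act_mul, act_mul_eq_lift, HH.comul_α_symm, HH.comul_α_symm, HH.comul_α_symm, HH.repr h]
  simp

lemma mulActMul_α_tmul (x y z : B) (h g c : H) :
    BB.mulActMul x (BB.β.symm y) (BB.β.symm (BB.act (HH.α.symm (HH.α.symm c)) (BB.β.symm z)))
        (HH.α h ⊗ₜ g)
      = BB.mul (BB.mul x (BB.act (HH.α.symm (HH.α.symm h)) (BB.β.symm y)))
          (BB.act (HH.α.symm (HH.α.symm (HH.mul (HH.α.symm g) c))) z) := by
  rw [mulActMul_tmul, BB.hom_assoc, BB.β_act, BB.β.apply_symm_apply, BB.act_assoc,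
    BB.β.apply_symm_apply, HH.α_symm_mul, HH.α_symm_mul]
  simp

end LModAlg

namespace LComodAlg

variable {HH : HomHopf k H} (AA : LComodAlg k H A HH)

lemma γ_symm_one : AA.γ.symm AA.one = AA.one := by
  rw [LinearEquiv.symm_apply_eq, AA.γ_one]

lemma γ_symm_mul (x y : A) :
    AA.γ.symm (AA.mul x y) = AA.mul (AA.γ.symm x) (AA.γ.symm y) := by
  rw [LinearEquiv.symm_apply_eq, AA.γ_mul]; simp

lemma mul_γ_symm_mul_γ (x y z : A) :
    AA.mul (AA.γ.symm (AA.mul x y)) (AA.γ z) = AA.mul x (AA.mul (AA.γ.symm y) z) := by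
  rw [AA.γ_symm_mul, ← AA.hom_assoc, LinearEquiv.apply_symm_apply]

lemma ρ_γ_eq_map (a : A) :
    AA.ρ (AA.γ a) = map HH.α.toLinearMap AA.γ.toLinearMap (AA.ρ a) := by
  simp [AA.ρ_γ, AA.reprρ a]

lemma ρ_γ_symm (a : A) :
    AA.ρ (AA.γ.symm a) = map HH.α.symm.toLinearMap AA.γ.symm.toLinearMap (AA.ρ a) := by
  conv_rhs => rw [← AA.γ.apply_symm_apply a, ρ_γ_eq_map, ← LinearMap.comp_apply, ← map_comp]
  simp

lemma ρ_mul_eq_map₂ (a a' : A) :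
    AA.ρ (AA.mul a a') = map₂ HH.mul AA.mul (AA.ρ a) (AA.ρ a') := by
  simp [AA.ρ_mul, AA.reprρ a, AA.reprρ a', map₂_apply_tmul]
  exact Finset.sum_comm

lemma map_comul_ρ (a : A) :
    map HH.comul AA.γ.toLinearMap (AA.ρ a)
      = (TensorProduct.assoc k H H A).symm (map HH.α.toLinearMap AA.ρ (AA.ρ a)) := by
  rw [LinearEquiv.eq_symm_apply]
  simpa [AA.reprρ a] using AA.ρ_coassoc a

end LComodAlg

section SmashProduct

variable (HH : HomHopf k H) (BB : LModAlg k H B HH) (AA : LComodAlg k H A HH)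

noncomputable def smashMulρ (b b' : B) (a' : A) : H ⊗[k] A →ₗ[k] B ⊗[k] A :=
  map (BB.mul b ∘ₗ BB.act.flip (BB.β.symm b') ∘ₗ (HH.α.symm.trans HH.α.symm).toLinearMap)
    (AA.mul.flip a' ∘ₗ AA.γ.symm.toLinearMap)

@[simp] lemma smashMulρ_tmul (b b' : B) (a' : A) (h : H) (v : A) :
    smashMulρ HH BB AA b b' a' (h ⊗ₜ v)
      = BB.mul b (BB.act (HH.α.symm (HH.α.symm h)) (BB.β.symm b'))
          ⊗ₜ AA.mul (AA.γ.symm v) a' := by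
  simp [smashMulρ]

def IsSmashMul (m : (B ⊗[k] A) →ₗ[k] (B ⊗[k] A) →ₗ[k] B ⊗[k] A) : Prop :=
  ∀ b a b' a', m (b ⊗ₜ a) (b' ⊗ₜ a') = smashMulρ HH BB AA b b' a' (AA.ρ a)

/-- Both sides of Hom-associativity on `(b ⊗ a)(b' ⊗ a')(b'' ⊗ a'')` are images of the two
sides of the coassociativity of `ρ a` under this map. -/
noncomputable def smashAssocMap (b b' b'' : B) (a' a'' : A) : (H ⊗[k] H) ⊗[k] A →ₗ[k] B ⊗[k] A :=
  ∑ j ∈ AA.Tc a', map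
    (BB.mulActMul b (BB.β.symm b')
      (BB.β.symm (BB.act (HH.α.symm (HH.α.symm (AA.c1 a' j))) (BB.β.symm b''))))
    (AA.mul.flip (AA.mul (AA.γ.symm (AA.c0 a' j)) a'') ∘ₗ AA.γ.symm.toLinearMap)

variable {HH BB AA}

lemma smashMulρ_comp_map_α_γ (b b' b'' : B) (c : H) (a'' : A) :
    smashMulρ HH BB AA (BB.β b) (BB.mul b' (BB.act (HH.α.symm (HH.α.symm c)) (BB.β.symm b'')))
        a'' ∘ₗ map HH.α.toLinearMap AA.γ.toLinearMap
      = map (BB.mulActMul b (BB.β.symm b')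
            (BB.β.symm (BB.act (HH.α.symm (HH.α.symm c)) (BB.β.symm b''))))
          (AA.mul.flip a'' ∘ₗ AA.γ.symm.toLinearMap) ∘ₗ map HH.comul AA.γ.toLinearMap := by
  refine TensorProduct.ext' fun h v => ?_
  simp [BB.β_symm_mul, BB.mul_β_act_α_symm_mul]

lemma map_β_γ_comp_smashMulρ (b b' : B) (a' : A) :
    map BB.β.toLinearMap AA.γ.toLinearMap ∘ₗ smashMulρ HH BB AA b b' a'
      = smashMulρ HH BB AA (BB.β b) (BB.β b') (AA.γ a') ∘ₗ
          map HH.α.toLinearMap AA.γ.toLinearMap := by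
  refine TensorProduct.ext' fun h v => ?_
  simp [BB.β_mul, BB.β_act, AA.γ_mul]

variable {m : (B ⊗[k] A) →ₗ[k] (B ⊗[k] A) →ₗ[k] B ⊗[k] A}

lemma IsSmashMul.hom_assoc_left (hm : IsSmashMul HH BB AA m) (b b' b'' : B) (a a' a'' : A) :
    m (BB.β b ⊗ₜ AA.γ a) (m (b' ⊗ₜ a') (b'' ⊗ₜ a''))
      = smashAssocMap HH BB AA b b' b'' a' a'' (map HH.comul AA.γ.toLinearMap (AA.ρ a)) := by
  rw [hm b' a', AA.reprρ a', map_sum, map_sum, smashAssocMap, LinearMap.sum_apply]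
  refine Finset.sum_congr rfl fun j _ => ?_
  rw [smashMulρ_tmul, hm, AA.ρ_γ_eq_map, ← LinearMap.comp_apply, smashMulρ_comp_map_α_γ]
  rfl

lemma IsSmashMul.hom_assoc_right (hm : IsSmashMul HH BB AA m) (b b' b'' : B) (a a' a'' : A) :
    m (m (b ⊗ₜ a) (b' ⊗ₜ a')) (BB.β b'' ⊗ₜ AA.γ a'')
      = smashAssocMap HH BB AA b b' b'' a' a''
          ((TensorProduct.assoc k H H A).symm (map HH.α.toLinearMap AA.ρ (AA.ρ a))) := by
  rw [hm]
  refine LinearMap.congr_fun (f := m.flip (BB.β b'' ⊗ₜ AA.γ a'') ∘ₗ smashMulρ HH BB AA b b' a')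
    (g := smashAssocMap HH BB AA b b' b'' a' a'' ∘ₗ
      (TensorProduct.assoc k H H A).symm.toLinearMap ∘ₗ map HH.α.toLinearMap AA.ρ)
    (TensorProduct.ext' fun h v => ?_) (AA.ρ a)
  simp only [LinearMap.comp_apply, LinearMap.flip_apply, smashMulρ_tmul, map_tmul,
    smashAssocMap, LinearMap.sum_apply]
  rw [hm, AA.ρ_mul_eq_map₂, AA.ρ_γ_symm, AA.reprρ v, AA.reprρ a']
  simp [map₂_apply_tmul, tmul_sum, BB.mulActMul_α_tmul, AA.mul_γ_symm_mul_γ, -LModAlg.mulActMul_tmul]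

lemma IsSmashMul.hom_assoc_tmul (hm : IsSmashMul HH BB AA m) (b b' b'' : B) (a a' a'' : A) :
    m (BB.β b ⊗ₜ AA.γ a) (m (b' ⊗ₜ a') (b'' ⊗ₜ a''))
      = m (m (b ⊗ₜ a) (b' ⊗ₜ a')) (BB.β b'' ⊗ₜ AA.γ a'') := by
  rw [hm.hom_assoc_left, hm.hom_assoc_right, AA.map_comul_ρ]

lemma IsSmashMul.hom_assoc (hm : IsSmashMul HH BB AA m) (x y z : B ⊗[k] A) :
    m (map BB.β.toLinearMap AA.γ.toLinearMap x) (m y z)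
      = m (m x y) (map BB.β.toLinearMap AA.γ.toLinearMap z) := by
  induction x using TensorProduct.induction_on with
  | zero => simp
  | add x₁ x₂ h₁ h₂ => simp only [map_add, LinearMap.add_apply, h₁, h₂]
  | tmul b a =>
    induction y using TensorProduct.induction_on with
    | zero => simp
    | add y₁ y₂ h₁ h₂ => simp only [map_add, LinearMap.add_apply, h₁, h₂]
    | tmul b' a' =>
      induction z using TensorProduct.induction_on with
      | zero => simp
      | add z₁ z₂ h₁ h₂ => simp only [map_add, h₁, h₂]
      | tmul b'' a'' => exact hm.hom_assoc_tmul b b' b'' a a' a''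

lemma IsSmashMul.one_mul (hm : IsSmashMul HH BB AA m) (x : B ⊗[k] A) :
    m (BB.one ⊗ₜ AA.one) x = map BB.β.toLinearMap AA.γ.toLinearMap x := by
  refine LinearMap.congr_fun (TensorProduct.ext' fun b a => ?_) x
  rw [hm, AA.ρ_one]
  simp [HH.α_symm_one, BB.act_one, BB.one_mul, AA.γ_symm_one, AA.one_mul]

lemma IsSmashMul.mul_one (hm : IsSmashMul HH BB AA m) (x : B ⊗[k] A) :
    m x (BB.one ⊗ₜ AA.one) = map BB.β.toLinearMap AA.γ.toLinearMap x := by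
  refine LinearMap.congr_fun (f := m.flip (BB.one ⊗ₜ AA.one))
    (TensorProduct.ext' fun b a => ?_) x
  rw [LinearMap.flip_apply, hm, AA.reprρ a, map_sum]
  simp [BB.β_symm_one, BB.act_unit, HH.counit_α_symm, AA.mul_one, BB.mul_one]
  rw [← AA.counit_ρ, tmul_sum]
  simp only [tmul_smul, smul_tmul']

lemma IsSmashMul.map_mul (hm : IsSmashMul HH BB AA m) (x y : B ⊗[k] A) :
    map BB.β.toLinearMap AA.γ.toLinearMap (m x y)
      = m (map BB.β.toLinearMap AA.γ.toLinearMap x) (map BB.β.toLinearMap AA.γ.toLinearMap y) := by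
  induction x using TensorProduct.induction_on with
  | zero => simp
  | add x₁ x₂ h₁ h₂ => simp only [map_add, LinearMap.add_apply, h₁, h₂]
  | tmul b a =>
    induction y using TensorProduct.induction_on with
    | zero => simp
    | add y₁ y₂ h₁ h₂ => simp only [map_add, h₁, h₂]
    | tmul b' a' =>
      rw [hm, map_tmul, map_tmul, LinearEquiv.coe_coe, LinearEquiv.coe_coe, hm, AA.ρ_γ_eq_map,
        ← LinearMap.comp_apply, map_β_γ_comp_smashMulρ, LinearMap.comp_apply]

end SmashProduct

/-- For a left `H`-module Hom-algebra `(B,β)` and a left `H`-comodule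
algebra `(A,γ)`, the multiplication
`(b⊗a)(b'⊗a') = b(α⁻²(a₍₋₁₎)·β⁻¹(b')) ⊗ γ⁻¹(a₍₀₎)a'` makes `(B ⊗ A, β ⊗ γ)` into a
Hom-associative algebra `B ⋉ A` with unit `1 ⊗ 1`. -/
theorem smash_BA_homAlgebra
    (HH : HomHopf k H) (BB : LModAlg k H B HH) (AA : LComodAlg k H A HH)
    (m : (B ⊗[k] A) →ₗ[k] (B ⊗[k] A) →ₗ[k] B ⊗[k] A)
    (hm : ∀ b a b' a', m (b ⊗ₜ[k] a) (b' ⊗ₜ[k] a')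
      = ∑ i ∈ AA.Tc a,
          BB.mul b (BB.act (HH.α.symm (HH.α.symm (AA.c1 a i))) (BB.β.symm b'))
            ⊗ₜ[k] AA.mul (AA.γ.symm (AA.c0 a i)) a') :
    (∀ x y z : B ⊗[k] A,
        m (TensorProduct.map BB.β.toLinearMap AA.γ.toLinearMap x) (m y z)
          = m (m x y) (TensorProduct.map BB.β.toLinearMap AA.γ.toLinearMap z)) ∧
    (∀ x : B ⊗[k] A, m (BB.one ⊗ₜ[k] AA.one) x
        = TensorProduct.map BB.β.toLinearMap AA.γ.toLinearMap x) ∧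
    (∀ x : B ⊗[k] A, m x (BB.one ⊗ₜ[k] AA.one)
        = TensorProduct.map BB.β.toLinearMap AA.γ.toLinearMap x) ∧
    (∀ x y : B ⊗[k] A,
        TensorProduct.map BB.β.toLinearMap AA.γ.toLinearMap (m x y)
          = m (TensorProduct.map BB.β.toLinearMap AA.γ.toLinearMap x)
              (TensorProduct.map BB.β.toLinearMap AA.γ.toLinearMap y)) := by
  have hm' : IsSmashMul HH BB AA m := fun b a b' a' => by
    rw [hm, AA.reprρ a, map_sum]
    simp
  exact ⟨hm'.hom_assoc, hm'.one_mul, hm'.mul_one, hm'.map_mul⟩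

end S18
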